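/- arXiv:1802.03642 — 2 statements merged into one kernel-verified Lean document; each statement's English description precedes it below -/
import Mathlib

section
/- Let u : ℕ → ℝ be a utility sequence with |u_{t+1} − u_t| ≤ W for all t for some constant W, and let T ∈ ℕ. For every stopping-time distribution δ with expected time 𝔼_δ = T whose support contains exactly one point t_0 < T (i.e., δ(t) = 0 for all t < T with t ≠ t_0 and δ(t_0) ≠ 0), and for every ε > 0, there exists a stopping-time distribution δ' with 𝔼_{δ'} = T whose support contains at most one point in [T,∞) such that 𝔼_{δ'}(u) ≤ 𝔼_δ(u) + ε. -/
open scoped BigOperators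

/-- A stopping-time distribution: pointwise nonnegative, total mass `1`,
with absolutely convergent expected time. -/
def IsStopDist (δ : ℕ → ℝ) : Prop :=
  (∀ t, 0 ≤ δ t) ∧ Summable δ ∧ (∑' t, δ t) = 1 ∧
    Summable (fun t : ℕ => (t : ℝ) * δ t)

/-- The expected (stopping) time of `δ`. -/
noncomputable def expTime (δ : ℕ → ℝ) : ℝ := ∑' t : ℕ, (t : ℝ) * δ t

/-- The expected utility of the utility sequence `u` under `δ`. -/
noncomputable def expUtil (u δ : ℕ → ℝ) : ℝ := ∑' t : ℕ, u t * δ t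

/-- The value of a utility sequence `u` under adversarial stopping-time
distributions with expected time `T`:
`val u T = inf { 𝔼_δ(u) | δ a stopping-time distribution with 𝔼_δ = T }`. -/
noncomputable def val (u : ℕ → ℝ) (T : ℕ) : ℝ :=
  sInf {x | ∃ δ : ℕ → ℝ, IsStopDist δ ∧ (Summable fun t => u t * δ t) ∧
    expTime δ = (T : ℝ) ∧ x = expUtil u δ}

/-!
Put `c = T - t₀`. Since `δ` vanishes below `T` except at `t₀`, the weights
`λ t = (t - t₀) δ t / c` (`mixWeight`) are nonnegative, and they sum to `1` because `𝔼_δ = T`.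
For `t > t₀` let `δₜ` be the two-point distribution on `{t₀, t}` with mean `T`; then
`δ = ∑ λ t • δₜ`, so `𝔼_δ(u) = ∑ λ t 𝔼_{δₜ}(u)` and some `δₜ` with `λ t ≠ 0` has
`𝔼_{δₜ}(u) ≤ 𝔼_δ(u)`. Its only support point in `[T, ∞)` is `t`.
-/

theorem HasSum.exists_ne_zero_le {ι : Type*} {w f : ι → ℝ} {a : ℝ} (hw : 0 ≤ w)
    (hw1 : HasSum w 1) (hwf : HasSum (fun i => w i * f i) a) :
    ∃ i, w i ≠ 0 ∧ f i ≤ a := by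
  by_contra! hlt
  obtain ⟨i, hi⟩ : ∃ i, w i ≠ 0 := by
    by_contra! h
    exact one_ne_zero (hw1.unique (by rw [show w = 0 from funext h]; exact hasSum_zero))
  have hle : (fun i => w i * a) ≤ fun i => w i * f i := fun j => by
    rcases eq_or_ne (w j) 0 with h | h
    · simp [h]
    · exact mul_le_mul_of_nonneg_left (hlt j h).le (hw j)
  have := hasSum_lt hle (mul_lt_mul_of_pos_left (hlt i hi) ((hw i).lt_of_ne' hi))
    (by simpa using hw1.mul_right a) hwf
  exact lt_irrefl a this

noncomputable def twoPoint (t₀ t₁ : ℕ) (b : ℝ) : ℕ → ℝ :=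
  Pi.single t₀ (1 - b) + Pi.single t₁ b

section TwoPoint

variable {t₀ t₁ : ℕ} {b : ℝ}

theorem hasSum_mul_twoPoint (v : ℕ → ℝ) :
    HasSum (fun t => v t * twoPoint t₀ t₁ b t) (v t₀ * (1 - b) + v t₁ * b) := by
  have h : (fun t => v t * twoPoint t₀ t₁ b t)
      = Pi.single t₀ (v t₀ * (1 - b)) + Pi.single t₁ (v t₁ * b) := by
    ext t
    simp only [twoPoint, Pi.add_apply, add_mul, mul_comm (v _), Pi.single_mul_left_apply]
  rw [h]
  exact (hasSum_pi_single _ _).add (hasSum_pi_single _ _)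

theorem isStopDist_twoPoint (hb₀ : 0 ≤ b) (hb₁ : b ≤ 1) : IsStopDist (twoPoint t₀ t₁ b) := by
  have hsum : HasSum (twoPoint t₀ t₁ b) 1 := by
    simpa using hasSum_mul_twoPoint (t₀ := t₀) (t₁ := t₁) (b := b) (fun _ => 1)
  refine ⟨fun t => ?_, hsum.summable, hsum.tsum_eq, (hasSum_mul_twoPoint _).summable⟩
  simp only [twoPoint, Pi.add_apply, Pi.single_apply]
  split_ifs <;> linarith

theorem expTime_twoPoint : expTime (twoPoint t₀ t₁ b) = t₀ * (1 - b) + t₁ * b :=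
  (hasSum_mul_twoPoint _).tsum_eq

theorem expUtil_twoPoint (u : ℕ → ℝ) :
    expUtil u (twoPoint t₀ t₁ b) = u t₀ * (1 - b) + u t₁ * b :=
  (hasSum_mul_twoPoint u).tsum_eq

theorem subsingleton_support_twoPoint_inter_Ici {T : ℕ} (ht₀ : t₀ < T) :
    {t : ℕ | twoPoint t₀ t₁ b t ≠ 0 ∧ T ≤ t}.Subsingleton := by
  refine (Set.subsingleton_singleton (a := t₁)).anti fun t ⟨hne, hT⟩ => ?_
  by_contra h₁
  have h₀ : t ≠ t₀ := by omega
  simp [twoPoint, h₀, Set.mem_singleton_iff.not.1 h₁] at hne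

end TwoPoint

noncomputable def twoPointOfMean (t₀ t₁ T : ℕ) : ℕ → ℝ :=
  twoPoint t₀ t₁ (((T : ℝ) - t₀) / ((t₁ : ℝ) - t₀))

section TwoPointOfMean

variable {t₀ t₁ T : ℕ}

theorem isStopDist_twoPointOfMean (h₀ : t₀ < T) (h₁ : T ≤ t₁) :
    IsStopDist (twoPointOfMean t₀ t₁ T) := by
  have h₀' : (t₀ : ℝ) < T := by exact_mod_cast h₀
  have h₁' : (T : ℝ) ≤ t₁ := by exact_mod_cast h₁
  apply isStopDist_twoPoint
  · exact div_nonneg (by linarith) (by linarith)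
  · exact div_le_one_of_le₀ (by linarith) (by linarith)

theorem expTime_twoPointOfMean (h : t₀ ≠ t₁) : expTime (twoPointOfMean t₀ t₁ T) = T := by
  have h' : (t₁ : ℝ) - t₀ ≠ 0 := sub_ne_zero.2 (by exact_mod_cast h.symm)
  rw [twoPointOfMean, expTime_twoPoint]
  field_simp
  ring

end TwoPointOfMean

noncomputable def mixWeight (δ : ℕ → ℝ) (t₀ T t : ℕ) : ℝ :=
  ((t : ℝ) - t₀) * δ t / ((T : ℝ) - t₀)

section MixWeight

variable {δ : ℕ → ℝ} {t₀ T : ℕ}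

theorem mixWeight_nonneg (hδ : 0 ≤ δ) (ht₀ : t₀ ≤ T) (hbelow : ∀ t < t₀, δ t = 0) :
    0 ≤ mixWeight δ t₀ T := fun t => by
  have hT : (t₀ : ℝ) ≤ T := by exact_mod_cast ht₀
  rcases lt_or_ge t t₀ with ht | ht
  · simp [mixWeight, hbelow t ht]
  · have ht' : (t₀ : ℝ) ≤ t := by exact_mod_cast ht
    exact div_nonneg (mul_nonneg (by linarith) (hδ t)) (by linarith)

theorem hasSum_mixWeight (hδ : IsStopDist δ) (hδT : expTime δ = T) (ht₀ : t₀ < T) :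
    HasSum (mixWeight δ t₀ T) 1 := by
  have hc : (T : ℝ) - t₀ ≠ 0 := sub_ne_zero.2 (by exact_mod_cast ht₀.ne')
  have htime : HasSum (fun t : ℕ => (t : ℝ) * δ t) T := hδT ▸ hδ.2.2.2.hasSum
  have hmass : HasSum δ 1 := hδ.2.2.1 ▸ hδ.2.1.hasSum
  have h := (htime.sub (hmass.mul_left (t₀ : ℝ))).div_const ((T : ℝ) - t₀)
  rw [mul_one, div_self hc] at h
  have hw : mixWeight δ t₀ T = fun t : ℕ => ((t : ℝ) * δ t - t₀ * δ t) / ((T : ℝ) - t₀) := by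
    ext t
    rw [mixWeight, sub_mul]
  rwa [hw]

theorem mixWeight_mul_expUtil_twoPointOfMean (u : ℕ → ℝ) (ht₀ : t₀ ≠ T) (t : ℕ) :
    mixWeight δ t₀ T t * expUtil u (twoPointOfMean t₀ t T)
      = mixWeight δ t₀ T t * u t₀ + (u t * δ t - u t₀ * δ t) := by
  rcases eq_or_ne t t₀ with rfl | ht
  · simp [mixWeight]
  · have ht' : (t : ℝ) - t₀ ≠ 0 := sub_ne_zero.2 (by exact_mod_cast ht)
    have hc : (T : ℝ) - t₀ ≠ 0 := sub_ne_zero.2 (by exact_mod_cast ht₀.symm)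
    simp only [mixWeight, twoPointOfMean, expUtil_twoPoint]
    field_simp
    ring

theorem hasSum_mixWeight_mul_expUtil (u : ℕ → ℝ) (hδ : IsStopDist δ)
    (hδu : Summable fun t => u t * δ t) (hδT : expTime δ = T) (ht₀ : t₀ < T) :
    HasSum (fun t => mixWeight δ t₀ T t * expUtil u (twoPointOfMean t₀ t T)) (expUtil u δ) := by
  have hmass : HasSum δ 1 := hδ.2.2.1 ▸ hδ.2.1.hasSum
  simp_rw [mixWeight_mul_expUtil_twoPointOfMean u ht₀.ne]
  have h := ((hasSum_mixWeight hδ hδT ht₀).mul_right (u t₀)).add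
    (hδu.hasSum.sub (hmass.mul_left (u t₀)))
  rwa [one_mul, mul_one, add_sub_cancel] at h

end MixWeight

theorem one_point_after_T_suffices_general
    (u : ℕ → ℝ) (T : ℕ)
    (δ : ℕ → ℝ) (hδ : IsStopDist δ)
    (hδu : Summable (fun t => u t * δ t))
    (hδT : expTime δ = (T : ℝ))
    (t₀ : ℕ) (ht₀T : t₀ < T)
    (honly : ∀ t, t < T → t ≠ t₀ → δ t = 0)
    (ε : ℝ) (hε : 0 < ε) :
    ∃ δ' : ℕ → ℝ, IsStopDist δ' ∧ (Summable fun t => u t * δ' t) ∧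
      expTime δ' = (T : ℝ) ∧
      {t : ℕ | δ' t ≠ 0 ∧ T ≤ t}.Subsingleton ∧
      expUtil u δ' ≤ expUtil u δ + ε := by
  obtain ⟨t₁, hw, hle⟩ := HasSum.exists_ne_zero_le
    (mixWeight_nonneg hδ.1 ht₀T.le fun t ht => honly t (ht.trans ht₀T) ht.ne)
    (hasSum_mixWeight hδ hδT ht₀T) (hasSum_mixWeight_mul_expUtil u hδ hδu hδT ht₀T)
  have ht₁ : t₁ ≠ t₀ := fun h => hw (by simp [mixWeight, h])
  have hT : T ≤ t₁ := by
    by_contra! h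
    exact hw (by simp [mixWeight, honly t₁ h ht₁])
  exact ⟨twoPointOfMean t₀ t₁ T, isStopDist_twoPointOfMean ht₀T hT,
    (hasSum_mul_twoPoint u).summable, expTime_twoPointOfMean ht₁.symm,
    subsingleton_support_twoPoint_inter_Ici ht₀T, by linarith⟩

/-- One point after `T` in the support almost suffices: if the support of `δ`
contains exactly one point `t₀ < T` before `T`, then for every `ε > 0` there is
a stopping-time distribution `δ'` with expected time `T`, whose support contains
at most one point in `[T, ∞)`, with expected utility at most `𝔼_δ(u) + ε`. -/
theorem one_point_after_T_suffices
    (u : ℕ → ℝ) (W : ℝ) (hW : ∀ t, |u (t + 1) - u t| ≤ W) (T : ℕ)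
    (δ : ℕ → ℝ) (hδ : IsStopDist δ)
    (hδu : Summable (fun t => u t * δ t))
    (hδT : expTime δ = (T : ℝ))
    (t₀ : ℕ) (ht₀T : t₀ < T) (ht₀ : δ t₀ ≠ 0)
    (honly : ∀ t, t < T → t ≠ t₀ → δ t = 0)
    (ε : ℝ) (hε : 0 < ε) :
    ∃ δ' : ℕ → ℝ, IsStopDist δ' ∧ (Summable fun t => u t * δ' t) ∧
      expTime δ' = (T : ℝ) ∧
      {t : ℕ | δ' t ≠ 0 ∧ T ≤ t}.Subsingleton ∧
      expUtil u δ' ≤ expUtil u δ + ε :=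
  one_point_after_T_suffices_general u T δ hδ hδu hδT t₀ ht₀T honly ε hε
end

section
/- For all weighted graphs G (with every vertex having an outgoing edge), all initial vertices v₀, and all T ∈ ℕ: val(G,T) = sup_{u ∈ U_G} val(u,T) = sup_{u ∈ S_G} val(u,T), i.e., stationary plans are sufficient for optimality in expected finite-horizon planning under adversarial stopping-time distribution. -/
open scoped BigOperators

/-- The sum of the weights of the first `n` edges of the infinite path with
vertex sequence `p` in the weighted graph with weight function `w`. -/
noncomputable def sumW {V : Type*} (w : V → V → ℤ) (p : ℕ → V) (n : ℕ) : ℝ :=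
  ∑ k ∈ Finset.range n, (w (p k) (p (k + 1)) : ℝ)

/-- The utility sequence induced by the path with vertex sequence `p`:
`u i = ∑_{k ≤ i} w(e_k)`. -/
noncomputable def pathUtil {V : Type*} (w : V → V → ℤ) (p : ℕ → V) : ℕ → ℝ :=
  fun i => sumW w p (i + 1)

/-- The value of the infinite path with vertex sequence `p` under adversarial
stopping-time distributions with expected time `T`. -/
noncomputable def pathVal {V : Type*} (w : V → V → ℤ) (p : ℕ → V) (T : ℕ) : ℝ :=
  val (pathUtil w p) T

/-- `p` is (the vertex sequence of) an infinite path from `v₀` in the graph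
with edge relation `E`. -/
def IsPath {V : Type*} (E : V → V → Prop) (v₀ : V) (p : ℕ → V) : Prop :=
  p 0 = v₀ ∧ ∀ i, E (p i) (p (i + 1))

/-- `ν = min_{0 ≤ t₁ ≤ T} inf_{t₂ ≥ T} (u t₂ - u t₁)/(t₂ - t₁)` for the
utility sequence `u` induced by the path `p`. -/
noncomputable def nuPath {V : Type*} (w : V → V → ℤ) (p : ℕ → V) (T : ℕ) : ℝ :=
  sInf {x | ∃ t₁ t₂ : ℕ, t₁ ≤ T ∧ T ≤ t₂ ∧ t₁ < t₂ ∧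
    x = (pathUtil w p t₂ - pathUtil w p t₁) / ((t₂ : ℝ) - (t₁ : ℝ))}

/-- `p` is a simple lasso `A·C^ω`: eventually periodic with period `c ≥ 1`
starting from position `a`, and all strict prefixes of the finite path `A·C`
are acyclic (the first `a + c` vertices are pairwise distinct). -/
def IsSimpleLasso {V : Type*} (p : ℕ → V) : Prop :=
  ∃ a c : ℕ, 1 ≤ c ∧ (∀ i, a ≤ i → p (i + c) = p i) ∧
    ∀ i j, i < a + c → j < a + c → p i = p j → i = j

/-!
A stopping-time distribution with mean `T` integrates every line `t ↦ L + m (t - T)` to `L`, so a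
line below a utility sequence `u` bounds `val u T` from below; conversely two-point distributions
realise the chords of `u` around `T`, which yields a supporting line of `u` at height `val u T`.

Given a path from `v₀`, take such a supporting line of its utility and look at the first cycle of
the path. If the cycle rises at least as fast as the line, repeating it forever gives a simple
lasso whose utility stays above the line, hence whose value is at least as large. Otherwise cut the
cycle out: the path stays above the line, and since weights are integers its weight sums after
time `|V|` rise by a fixed gap `δ > 0`. Bounded weights allow this only finitely often.
-/

open Finset Filter Topology

section Value

variable {u : ℕ → ℝ} {T : ℕ}

def valSet (u : ℕ → ℝ) (T : ℕ) : Set ℝ :=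
  {x | ∃ δ : ℕ → ℝ, IsStopDist δ ∧ (Summable fun t => u t * δ t) ∧
    expTime δ = (T : ℝ) ∧ x = expUtil u δ}

noncomputable def twoPointDist (t₁ t₂ T : ℕ) : ℕ → ℝ := fun t =>
  if t = t₁ then ((t₂ : ℝ) - T) / ((t₂ : ℝ) - t₁)
  else if t = t₂ then ((T : ℝ) - t₁) / ((t₂ : ℝ) - t₁) else 0

theorem hasSum_mul_twoPointDist (f : ℕ → ℝ) {t₁ t₂ : ℕ} (h : t₁ ≠ t₂) (T : ℕ) :
    HasSum (fun t => f t * twoPointDist t₁ t₂ T t)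
      ((((t₂ : ℝ) - T) * f t₁ + ((T : ℝ) - t₁) * f t₂) / ((t₂ : ℝ) - t₁)) := by
  have hsupp : ∀ t ∉ ({t₁, t₂} : Finset ℕ), f t * twoPointDist t₁ t₂ T t = 0 := by
    intro t ht
    simp only [Finset.mem_insert, Finset.mem_singleton, not_or] at ht
    simp [twoPointDist, ht.1, ht.2]
  convert hasSum_sum_of_ne_finset_zero hsupp using 1
  · simp [Finset.sum_pair h, twoPointDist, h.symm]
    ring
  · infer_instance

theorem chord_mem_valSet (u : ℕ → ℝ) {t₁ t₂ T : ℕ} (h₁ : t₁ ≤ T) (h₂ : T ≤ t₂) (h : t₁ < t₂) :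
    (((t₂ : ℝ) - T) * u t₁ + ((T : ℝ) - t₁) * u t₂) / ((t₂ : ℝ) - t₁) ∈ valSet u T := by
  have h₁' : (t₁ : ℝ) ≤ T := by exact_mod_cast h₁
  have h₂' : (T : ℝ) ≤ t₂ := by exact_mod_cast h₂
  have hlen : (0 : ℝ) < (t₂ : ℝ) - t₁ := sub_pos.2 (by exact_mod_cast h)
  have hmass := hasSum_mul_twoPointDist (fun _ => 1) h.ne T
  have htime := hasSum_mul_twoPointDist (fun t => (t : ℝ)) h.ne T
  have hutil := hasSum_mul_twoPointDist u h.ne T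
  simp only [one_mul, mul_one] at hmass
  refine ⟨twoPointDist t₁ t₂ T, ⟨fun t => ?_, hmass.summable, ?_, htime.summable⟩,
    hutil.summable, ?_, hutil.tsum_eq.symm⟩
  · unfold twoPointDist
    split_ifs <;> first | exact le_rfl | exact div_nonneg (by linarith) hlen.le
  · rw [hmass.tsum_eq, div_eq_one_iff_eq hlen.ne']
    ring
  · rw [expTime, htime.tsum_eq, div_eq_iff hlen.ne']
    ring

theorem le_of_mem_valSet {L m x : ℝ} (hline : ∀ t : ℕ, L + m * ((t : ℝ) - T) ≤ u t)
    (hx : x ∈ valSet u T) : L ≤ x := by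
  obtain ⟨δ, ⟨hnn, hδs, hδ1, htδs⟩, hus, hT, rfl⟩ := hx
  have hδ : HasSum δ 1 := hδ1 ▸ hδs.hasSum
  have htδ : HasSum (fun t : ℕ => (t : ℝ) * δ t) T := hT ▸ htδs.hasSum
  -- integrating the line against `δ` gives `L`, since `δ` has mass `1` and mean `T`
  have hline_int : HasSum (fun t : ℕ => (L + m * ((t : ℝ) - T)) * δ t) L := by
    convert (hδ.mul_left (L - m * T)).add (htδ.mul_left m) using 1 <;> (try ext t) <;> ring
  exact hasSum_le (fun t => mul_le_mul_of_nonneg_right (hline t) (hnn t)) hline_int hus.hasSum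

theorem bddBelow_valSet {L m : ℝ} (hline : ∀ t : ℕ, L + m * ((t : ℝ) - T) ≤ u t) :
    BddBelow (valSet u T) :=
  ⟨L, fun _ => le_of_mem_valSet hline⟩

theorem le_val_of_line {L m : ℝ} (hline : ∀ t : ℕ, L + m * ((t : ℝ) - T) ≤ u t) : L ≤ val u T :=
  le_csInf ⟨_, chord_mem_valSet u le_rfl (Nat.le_succ T) (Nat.lt_succ_self T)⟩
    fun _ => le_of_mem_valSet hline

theorem val_le_chord (hb : BddBelow (valSet u T)) {t₁ t₂ : ℕ} (h₁ : t₁ ≤ T) (h₂ : T ≤ t₂)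
    (h : t₁ < t₂) :
    val u T ≤ (((t₂ : ℝ) - T) * u t₁ + ((T : ℝ) - t₁) * u t₂) / ((t₂ : ℝ) - t₁) :=
  csInf_le hb (chord_mem_valSet u h₁ h₂ h)

theorem val_le_apply (hb : BddBelow (valSet u T)) : val u T ≤ u T := by
  simpa using val_le_chord hb le_rfl (Nat.le_succ T) (Nat.lt_succ_self T)

theorem exists_supporting_line {L m : ℝ} (hline : ∀ t : ℕ, L + m * ((t : ℝ) - T) ≤ u t) :
    ∃ m' : ℝ, ∀ t : ℕ, val u T + m' * ((t : ℝ) - T) ≤ u t := by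
  have hb := bddBelow_valSet hline
  have hvalT := val_le_apply hb
  rcases Nat.eq_zero_or_pos T with rfl | hT
  · have hL : L ≤ val u 0 := le_val_of_line hline
    refine ⟨m + L - u 0, fun t => ?_⟩
    rcases Nat.eq_zero_or_pos t with rfl | ht
    · simpa using hvalT
    · have ht' : (1 : ℝ) ≤ t := by exact_mod_cast ht
      have := hline t
      simp only [CharP.cast_eq_zero, sub_zero] at this ⊢
      nlinarith
  -- the steepest chord from a point before `T` to `(T, val u T)`
  set slope : ℕ → ℝ := fun t₁ => (val u T - u t₁) / ((T : ℝ) - t₁)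
  have hne : (range T).Nonempty := nonempty_range_iff.2 hT.ne'
  refine ⟨(range T).sup' hne slope, fun t => ?_⟩
  rcases lt_trichotomy t T with ht | rfl | ht
  · have hpos : (0 : ℝ) < (T : ℝ) - t := sub_pos.2 (by exact_mod_cast ht)
    have h := le_sup' slope (mem_range.2 ht)
    rw [div_le_iff₀ hpos] at h
    linarith
  · simpa using hvalT
  · obtain ⟨t₁, ht₁, hmax⟩ := exists_mem_eq_sup' hne slope
    have ht₁T : t₁ < T := mem_range.1 ht₁
    have ha : (0 : ℝ) < (T : ℝ) - t₁ := sub_pos.2 (by exact_mod_cast ht₁T)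
    have hb' : (0 : ℝ) < (t : ℝ) - T := sub_pos.2 (by exact_mod_cast ht)
    have hchord := val_le_chord hb ht₁T.le ht.le (ht₁T.trans ht)
    rw [le_div_iff₀ (by linarith)] at hchord
    have h : slope t₁ * ((t : ℝ) - T) ≤ u t - val u T := by
      simp only [slope]
      rw [div_mul_eq_mul_div, div_le_iff₀ ha]
      nlinarith
    rw [hmax]
    linarith

end Value

theorem Set.Finite.exists_pos_forall_intCast_add_le_of_lt {s : Set ℝ} (hs : s.Finite) :
    ∃ δ > 0, ∀ r ∈ s, ∀ k : ℤ, (k : ℝ) < r → k + δ ≤ r := by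
  have hgap : ∀ r ∈ s, ∀ᶠ δ in 𝓝[>] (0 : ℝ), ∀ k : ℤ, (k : ℝ) < r → k + δ ≤ r := by
    intro r _
    have hpos : (0 : ℝ) < r + 1 - ⌈r⌉ := by linarith [Int.ceil_lt_add_one r]
    filter_upwards [nhdsWithin_le_nhds (Iio_mem_nhds hpos)] with δ hδ k hk
    have hk' : (k : ℝ) ≤ ⌈r⌉ - 1 := by
      exact_mod_cast Int.le_sub_one_of_lt (Int.lt_ceil.2 hk)
    linarith [Set.mem_Iio.1 hδ]
  obtain ⟨δ, hδ, hpos⟩ := (((eventually_all_finite hs).2 hgap).and self_mem_nhdsWithin).exists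
  exact ⟨δ, hpos, hδ⟩

theorem le_of_add_period {f : ℕ → ℝ} {b m s : ℝ} {i c : ℕ} (hc : 0 < c) (hs : m * c ≤ s)
    (hf : ∀ x, i ≤ x → f (x + c) = f x + s)
    (hinit : ∀ x, 1 ≤ x → x ≤ i + c → b + m * x ≤ f x) :
    ∀ x, 1 ≤ x → b + m * x ≤ f x := by
  intro x
  induction x using Nat.strong_induction_on with
  | _ x ih =>
    intro hx
    rcases le_or_gt x (i + c) with hxc | hxc
    · exact hinit x hx hxc
    · obtain ⟨y, rfl⟩ : ∃ y, x = y + c := ⟨x - c, by omega⟩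
      have hy := ih y (by omega) (by omega)
      rw [hf y (by omega)]
      push_cast
      linarith

section Paths

variable {V : Type*} {E : V → V → Prop} {w : V → V → ℤ} {v₀ : V} {p q : ℕ → V}

theorem exists_isPath (hout : ∀ v, ∃ v', E v v') (v₀ : V) : ∃ p, IsPath E v₀ p := by
  choose f hf using hout
  exact ⟨fun k => f^[k] v₀, rfl, fun k => by simpa only [Function.iterate_succ_apply'] using hf _⟩

theorem sumW_succ (w : V → V → ℤ) (p : ℕ → V) (x : ℕ) :
    sumW w p (x + 1) = sumW w p x + w (p x) (p (x + 1)) :=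
  sum_range_succ _ _

theorem sumW_eq_intCast (w : V → V → ℤ) (p : ℕ → V) (x : ℕ) :
    sumW w p x = ((∑ k ∈ range x, w (p k) (p (k + 1)) : ℤ) : ℝ) := by
  simp [sumW]

theorem sumW_congr {x : ℕ} (h : ∀ t ≤ x, p t = q t) : sumW w p x = sumW w q x :=
  sum_congr rfl fun k hk => by
    have hk := mem_range.1 hk
    rw [h k hk.le, h (k + 1) hk]

theorem abs_sumW_le {W : ℝ} (hW : ∀ v v', |(w v v' : ℝ)| ≤ W) (p : ℕ → V) (x : ℕ) :
    |sumW w p x| ≤ W * x :=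
  calc |sumW w p x| ≤ ∑ k ∈ range x, |(w (p k) (p (k + 1)) : ℝ)| := abs_sum_le_sum_abs _ _
    _ ≤ ∑ _k ∈ range x, W := sum_le_sum fun _ _ => hW _ _
    _ = W * x := by simp [mul_comm]

theorem exists_abs_weight_le [Finite V] (w : V → V → ℤ) :
    ∃ W : ℝ, ∀ v v', |(w v v' : ℝ)| ≤ W := by
  obtain ⟨W, hW⟩ := Finite.bddAbove_range fun e : V × V => |(w e.1 e.2 : ℝ)|
  exact ⟨W, fun v v' => hW ⟨(v, v'), rfl⟩⟩

theorem sumW_sub_sumW_of_shift {i c x : ℕ} (h : ∀ t, i ≤ t → q t = p (t + c)) (hx : i ≤ x) :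
    sumW w q x - sumW w q i = sumW w p (x + c) - sumW w p (i + c) := by
  induction x, hx using Nat.le_induction with
  | base => simp
  | succ x hx ih =>
    rw [sumW_succ, h x hx, h (x + 1) (by omega), show x + 1 + c = x + c + 1 by omega, sumW_succ]
    linarith

theorem exists_first_repeat [Finite V] (p : ℕ → V) :
    ∃ i c, 0 < c ∧ i + c ≤ Nat.card V ∧ p (i + c) = p i ∧
      ∀ a b, a < i + c → b < i + c → p a = p b → a = b := by
  classical
  have hex : ∃ j, ∃ i < j, p i = p j := by
    obtain ⟨a, b, hab, he⟩ := Finite.exists_ne_map_eq_of_infinite p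
    rcases hab.lt_or_gt with h | h
    exacts [⟨b, a, h, he⟩, ⟨a, b, h, he.symm⟩]
  obtain ⟨i, hij, hpij⟩ := Nat.find_spec hex
  have hinj : ∀ a b, a < Nat.find hex → b < Nat.find hex → p a = p b → a = b := by
    intro a b ha hb hab
    by_contra hne
    rcases Nat.lt_or_gt_of_ne hne with h | h
    · exact Nat.find_min hex hb ⟨a, h, hab⟩
    · exact Nat.find_min hex ha ⟨b, h, hab.symm⟩
  have hcard : Nat.find hex ≤ Nat.card V := by
    simpa using Nat.card_le_card_of_injective (fun k : Fin (Nat.find hex) => p k)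
      fun a b h => Fin.ext (hinj a b a.2 b.2 h)
  refine ⟨i, Nat.find hex - i, by omega, by omega, ?_, ?_⟩ <;>
    rw [Nat.add_sub_cancel' hij.le]
  exacts [hpij.symm, hinj]

theorem pathUtil_above_line {W : ℝ} (hW : ∀ v v', |(w v v' : ℝ)| ≤ W) (p : ℕ → V) (T t : ℕ) :
    -(W * (T + 1)) + -W * ((t : ℝ) - T) ≤ pathUtil w p t := by
  have h := (abs_le.1 (abs_sumW_le hW p (t + 1))).1
  push_cast at h
  simp only [pathUtil]
  linarith

theorem pathVal_le {W : ℝ} (hW : ∀ v v', |(w v v' : ℝ)| ≤ W) (p : ℕ → V) (T : ℕ) :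
    pathVal w p T ≤ W * (T + 1) := by
  have h := (abs_le.1 (abs_sumW_le hW p (T + 1))).2
  push_cast at h
  exact (val_le_apply (bddBelow_valSet (pathUtil_above_line hW p T))).trans h

end Paths

section Lassos

variable {V : Type*} {E : V → V → Prop} {w : V → V → ℤ} {v₀ : V} {p q : ℕ → V} {i c : ℕ}

def SumWAbove (w : V → V → ℤ) (p : ℕ → V) (b m : ℝ) (x₀ : ℕ) : Prop :=
  ∀ x, x₀ ≤ x → b + m * x ≤ sumW w p x

theorem sumWAbove_one_iff {L m : ℝ} {T : ℕ} :
    SumWAbove w p (L - m * (T + 1)) m 1 ↔ ∀ t : ℕ, L + m * ((t : ℝ) - T) ≤ pathUtil w p t := by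
  constructor
  · intro h t
    have h := h (t + 1) (by omega)
    push_cast at h
    simp only [pathUtil]
    linarith
  · intro h x hx
    obtain ⟨t, rfl⟩ : ∃ t, x = t + 1 := ⟨x - 1, by omega⟩
    have h := h t
    simp only [pathUtil] at h
    push_cast
    linarith

def skipCycle (p : ℕ → V) (i c : ℕ) : ℕ → V := fun t => if t < i then p t else p (t + c)

def lasso (p : ℕ → V) (i c : ℕ) : ℕ → V := fun t => if t < i then p t else p (i + (t - i) % c)

theorem skipCycle_of_le (hcyc : p (i + c) = p i) {t : ℕ} (ht : t ≤ i) :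
    skipCycle p i c t = p t := by
  unfold skipCycle
  split_ifs with h
  · rfl
  · rw [show t = i by omega, hcyc]

theorem skipCycle_of_ge {t : ℕ} (ht : i ≤ t) : skipCycle p i c t = p (t + c) :=
  if_neg (Nat.not_lt.2 ht)

theorem IsPath.skipCycle (hp : IsPath E v₀ p) (hcyc : p (i + c) = p i) :
    IsPath E v₀ (skipCycle p i c) := by
  refine ⟨(skipCycle_of_le hcyc (Nat.zero_le i)).trans hp.1, fun t => ?_⟩
  rcases lt_or_ge t i with ht | ht
  · rw [skipCycle_of_le hcyc ht.le, skipCycle_of_le hcyc ht]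
    exact hp.2 t
  · rw [skipCycle_of_ge ht, skipCycle_of_ge (by omega), show t + 1 + c = t + c + 1 by omega]
    exact hp.2 _

theorem sumW_skipCycle_of_le (hcyc : p (i + c) = p i) {x : ℕ} (hx : x ≤ i) :
    sumW w (skipCycle p i c) x = sumW w p x :=
  sumW_congr fun _ ht => skipCycle_of_le hcyc (ht.trans hx)

theorem sumW_skipCycle (hcyc : p (i + c) = p i) {x : ℕ} (hx : i ≤ x) :
    sumW w (skipCycle p i c) x = sumW w p (x + c) - (sumW w p (i + c) - sumW w p i) := by
  have h := sumW_sub_sumW_of_shift (w := w) (q := skipCycle p i c) (fun _ => skipCycle_of_ge) hx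
  rw [sumW_skipCycle_of_le hcyc le_rfl] at h
  linarith

theorem SumWAbove.skipCycle {b m : ℝ} (hA : SumWAbove w p b m 1) (hcyc : p (i + c) = p i)
    (hs : sumW w p (i + c) - sumW w p i ≤ m * c) : SumWAbove w (skipCycle p i c) b m 1 := by
  intro x hx
  rcases le_total x i with hxi | hix
  · rw [sumW_skipCycle_of_le hcyc hxi]
    exact hA x hx
  · have h := hA (x + c) (by omega)
    rw [sumW_skipCycle hcyc hix]
    push_cast at h
    linarith

theorem lasso_of_lt {t : ℕ} (ht : t < i + c) : lasso p i c t = p t := by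
  unfold lasso
  split_ifs with h
  · rfl
  · rw [Nat.mod_eq_of_lt (by omega), Nat.add_sub_cancel' (by omega)]

theorem lasso_add_period {t : ℕ} (ht : i ≤ t) : lasso p i c (t + c) = lasso p i c t := by
  simp only [lasso, if_neg (Nat.not_lt.2 ht), if_neg (by omega : ¬t + c < i),
    show t + c - i = t - i + c by omega, Nat.add_mod_right]

theorem lasso_of_le (hc : 0 < c) (hcyc : p (i + c) = p i) {t : ℕ} (ht : t ≤ i + c) :
    lasso p i c t = p t := by
  rcases ht.lt_or_eq with ht | rfl
  · exact lasso_of_lt ht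
  · rw [lasso_add_period le_rfl, lasso_of_lt (by omega), hcyc]

theorem forall_rel_of_add_period {r : V → V → Prop} (hc : 0 < c)
    (hper : ∀ t, i ≤ t → q (t + c) = q t) (hinit : ∀ t < i + c, r (q t) (q (t + 1))) (t : ℕ) :
    r (q t) (q (t + 1)) := by
  induction t using Nat.strong_induction_on with
  | _ t ih =>
    rcases lt_or_ge t (i + c) with ht | ht
    · exact hinit t ht
    · obtain ⟨s, rfl⟩ : ∃ s, t = s + c := ⟨t - c, by omega⟩
      rw [hper s (by omega), show s + c + 1 = s + 1 + c by omega, hper (s + 1) (by omega)]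
      exact ih s (by omega)

theorem IsPath.lasso (hp : IsPath E v₀ p) (hc : 0 < c) (hcyc : p (i + c) = p i) :
    IsPath E v₀ (lasso p i c) :=
  ⟨(lasso_of_lt (by omega)).trans hp.1, forall_rel_of_add_period hc (fun _ => lasso_add_period)
    fun t ht => by
      rw [lasso_of_le hc hcyc ht.le, lasso_of_le hc hcyc ht]
      exact hp.2 t⟩

theorem isSimpleLasso_lasso (hc : 0 < c)
    (hinj : ∀ a b, a < i + c → b < i + c → p a = p b → a = b) : IsSimpleLasso (lasso p i c) :=
  ⟨i, c, hc, fun _ => lasso_add_period, fun a b ha hb h =>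
    hinj a b ha hb (by rwa [lasso_of_lt ha, lasso_of_lt hb] at h)⟩

theorem sumW_lasso_of_le (hc : 0 < c) (hcyc : p (i + c) = p i) {x : ℕ} (hx : x ≤ i + c) :
    sumW w (lasso p i c) x = sumW w p x :=
  sumW_congr fun _ ht => lasso_of_le hc hcyc (ht.trans hx)

theorem sumW_lasso_add_period (hc : 0 < c) (hcyc : p (i + c) = p i) {x : ℕ} (hx : i ≤ x) :
    sumW w (lasso p i c) (x + c) =
      sumW w (lasso p i c) x + (sumW w p (i + c) - sumW w p i) := by
  have h := sumW_sub_sumW_of_shift (w := w) (q := lasso p i c)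
    (fun _ ht => (lasso_add_period (p := p) ht).symm) hx
  rw [sumW_lasso_of_le hc hcyc (x := i) (by omega), sumW_lasso_of_le hc hcyc le_rfl] at h
  linarith

theorem SumWAbove.lasso {b m : ℝ} (hA : SumWAbove w p b m 1) (hc : 0 < c)
    (hcyc : p (i + c) = p i) (hs : m * c ≤ sumW w p (i + c) - sumW w p i) :
    SumWAbove w (lasso p i c) b m 1 :=
  le_of_add_period hc hs (fun _ => sumW_lasso_add_period hc hcyc) fun x hx hxc => by
    rw [sumW_lasso_of_le hc hcyc hxc]
    exact hA x hx

end Lassos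

section Stationary

variable {V : Type*} [Finite V] {E : V → V → Prop} {w : V → V → ℤ} {v₀ : V} {p q : ℕ → V}

theorem exists_simpleLasso_or_skipCycle {b m δ : ℝ}
    (hδ : ∀ c ≤ Nat.card V, ∀ k : ℤ, (k : ℝ) < m * c → k + δ ≤ m * c)
    (hp : IsPath E v₀ p) (hA : SumWAbove w p b m 1) :
    (∃ q, IsPath E v₀ q ∧ IsSimpleLasso q ∧ SumWAbove w q b m 1) ∨
      ∃ q, IsPath E v₀ q ∧ SumWAbove w q b m 1 ∧
        ∀ K, SumWAbove w p K m (Nat.card V) → SumWAbove w q (K + δ) m (Nat.card V) := by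
  obtain ⟨i, c, hc, hcard, hcyc, hinj⟩ := exists_first_repeat p
  rcases le_or_gt (m * c) (sumW w p (i + c) - sumW w p i) with hgood | hgood
  · exact Or.inl
      ⟨lasso p i c, hp.lasso hc hcyc, isSimpleLasso_lasso hc hinj, hA.lasso hc hcyc hgood⟩
  -- the cycle weight is an integer below `m * c`, hence at least `δ` below it
  have hgap : sumW w p (i + c) - sumW w p i + δ ≤ m * c := by
    rw [sumW_eq_intCast, sumW_eq_intCast, ← Int.cast_sub] at hgood ⊢
    exact hδ c (by omega) _ hgood
  refine Or.inr
    ⟨skipCycle p i c, hp.skipCycle hcyc, hA.skipCycle hcyc hgood.le, fun K hK x hx => ?_⟩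
  have h := hK (x + c) (by omega)
  rw [sumW_skipCycle hcyc (by omega)]
  push_cast at h
  linarith

theorem exists_simpleLasso_of_sumWAbove {b m : ℝ} (hq : IsPath E v₀ q)
    (hA : SumWAbove w q b m 1) : ∃ p, IsPath E v₀ p ∧ IsSimpleLasso p ∧ SumWAbove w p b m 1 := by
  have : Nonempty V := ⟨v₀⟩
  set n := Nat.card V
  obtain ⟨W, hW⟩ := exists_abs_weight_le w
  obtain ⟨δ, hδpos, hδ⟩ :=
    ((Set.finite_Iic n).image fun c : ℕ => m * c).exists_pos_forall_intCast_add_le_of_lt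
  -- `sumW w p n ≤ W n` caps how often the tail can be raised by `δ`
  have key : ∀ N : ℕ, ∀ K : ℝ, ∀ p, IsPath E v₀ p → SumWAbove w p b m 1 →
      SumWAbove w p K m n → (W - m) * n < K + N * δ →
      ∃ p, IsPath E v₀ p ∧ IsSimpleLasso p ∧ SumWAbove w p b m 1 := by
    intro N
    induction N with
    | zero =>
      intro K p _ _ hK hN
      have h := hK n le_rfl
      have hW' := (abs_le.1 (abs_sumW_le hW p n)).2
      simp only [CharP.cast_eq_zero, zero_mul, add_zero] at hN
      linarith
    | succ N ih =>
      intro K p hp hA hK hN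
      rcases exists_simpleLasso_or_skipCycle (fun c hc => hδ _ ⟨c, hc, rfl⟩) hp hA with
        h | ⟨p', hp', hA', hK'⟩
      · exact h
      · exact ih (K + δ) p' hp' hA' (hK' K hK) (by push_cast at hN; linarith)
  obtain ⟨N, hN⟩ := exists_nat_gt (((W - m) * n - b) / δ)
  rw [div_lt_iff₀ hδpos] at hN
  exact key N b q hq hA (fun x hx => hA x (Nat.card_pos.trans_le hx)) (by linarith)

theorem exists_simpleLasso_pathVal_ge (w : V → V → ℤ) (hq : IsPath E v₀ q) (T : ℕ) :
    ∃ p, IsPath E v₀ p ∧ IsSimpleLasso p ∧ pathVal w q T ≤ pathVal w p T := by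
  obtain ⟨W, hW⟩ := exists_abs_weight_le w
  obtain ⟨m, hm⟩ := exists_supporting_line (pathUtil_above_line hW q T)
  obtain ⟨p, hp, hlasso, hA⟩ := exists_simpleLasso_of_sumWAbove hq (sumWAbove_one_iff.2 hm)
  exact ⟨p, hp, hlasso, le_val_of_line (sumWAbove_one_iff.1 hA)⟩

end Stationary

/-- Stationary plans are sufficient for optimality under adversarial
stopping-time distributions: the supremum of values over all infinite paths
from `v₀` equals the supremum over stationary plans (simple lassos). -/
theorem stationary_plans_sufficient
    {V : Type*} [Fintype V]
    (E : V → V → Prop) (w : V → V → ℤ)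
    (hout : ∀ v : V, ∃ v' : V, E v v')
    (v₀ : V) (T : ℕ) :
    sSup {x | ∃ q : ℕ → V, IsPath E v₀ q ∧ x = pathVal w q T} =
      sSup {x | ∃ q : ℕ → V, IsPath E v₀ q ∧ IsSimpleLasso q ∧
        x = pathVal w q T} := by
  obtain ⟨W, hW⟩ := exists_abs_weight_le w
  have hbdd : BddAbove {x | ∃ q : ℕ → V, IsPath E v₀ q ∧ x = pathVal w q T} :=
    ⟨W * (T + 1), by rintro _ ⟨q, -, rfl⟩; exact pathVal_le hW q T⟩
  have hsub : {x | ∃ q : ℕ → V, IsPath E v₀ q ∧ IsSimpleLasso q ∧ x = pathVal w q T} ⊆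
      {x | ∃ q : ℕ → V, IsPath E v₀ q ∧ x = pathVal w q T} := fun _ ⟨q, hq, _, hx⟩ => ⟨q, hq, hx⟩
  obtain ⟨q₀, hq₀⟩ := exists_isPath hout v₀
  obtain ⟨p₀, hp₀, hlasso₀, -⟩ := exists_simpleLasso_pathVal_ge w hq₀ T
  refine le_antisymm (csSup_le ⟨_, q₀, hq₀, rfl⟩ ?_)
    (csSup_le_csSup hbdd ⟨_, p₀, hp₀, hlasso₀, rfl⟩ hsub)
  rintro _ ⟨q, hq, rfl⟩
  obtain ⟨p, hp, hlasso, hle⟩ := exists_simpleLasso_pathVal_ge w hq T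
  exact hle.trans (le_csSup (hbdd.mono hsub) ⟨p, hp, hlasso, rfl⟩)
end
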